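/- If 0 ≤ I < 1, then for every nonnegative integer Z, the success probability of a time-restricted double-spending attack converges to that of a time-unrestricted double-spending attack as the time restriction is removed: P_TR(I,Z,L) → P_TU(I,Z) as L → ∞. -/

import Mathlib

/-- `pathCount i m` is the number of sequences `(s 1, …, s (m+2i+1))` with every entry `±1`,
exactly `i` entries equal to `+1` (hence `m+i+1` entries equal to `-1`), such that
`m + s 1 + ⋯ + s T ≥ 0` for every `T ≤ m + 2i` (the walk started at `m` first reaches `-1`
exactly at the final step). -/
noncomputable def pathCount (i m : ℕ) : ℕ :=
  Nat.card {s : Fin (m + 2 * i + 1) → ℤ //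
    (∀ t, s t = 1 ∨ s t = -1) ∧
    (Finset.univ.filter fun t => s t = 1).card = i ∧
    ∀ T : ℕ, T ≤ m + 2 * i →
      0 ≤ (m : ℤ) + ∑ t ∈ Finset.univ.filter (fun t : Fin (m + 2 * i + 1) => (t : ℕ) < T), s t}

/-- Success probability of a time-restricted double-spending attack with `Z` confirmation
blocks and time restriction of `L` honest blocks after confirmation. -/
noncomputable def P_TR (I : ℝ) (Z L : ℕ) : ℝ :=
  1 - ∑ k ∈ Finset.range (Z + 2),
    (Nat.choose (k + Z) k : ℝ) * I ^ k * (1 - I) ^ (Z + 1) *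
      (1 - ∑ i ∈ Finset.range L,
        (pathCount i (Z + 1 - k) : ℝ) * (1 - I) ^ i * I ^ (Z + 2 - k + i))

/-- The gambler's-ruin catch-up probability `P_I(m)` for a time-unrestricted attack. -/
noncomputable def gamblerP (I : ℝ) (m : ℕ) : ℝ :=
  if I < 1 / 2 then (I / (1 - I)) ^ (m + 1) else 1

/-- Success probability of a time-unrestricted double-spending attack with `Z` confirmation
blocks. -/
noncomputable def P_TU (I : ℝ) (Z : ℕ) : ℝ :=
  1 - ∑ k ∈ Finset.range (Z + 2),
    (Nat.choose (k + Z) k : ℝ) * I ^ k * (1 - I) ^ (Z + 1) * (1 - gamblerP I (Z + 1 - k))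

namespace DS

def GoodL (m i : ℕ) (l : List ℤ) : Prop :=
  l.length = m + 2 * i + 1 ∧ (∀ x ∈ l, x = 1 ∨ x = -1) ∧ l.count 1 = i ∧
  ∀ T : ℕ, T ≤ m + 2 * i → 0 ≤ (m : ℤ) + (l.take T).sum

lemma count_ofFn {n : ℕ} (s : Fin n → ℤ) :
    (List.ofFn s).count 1 = (Finset.univ.filter fun t => s t = 1).card := by
  induction n with
  | zero => simp
  | succ n ih =>
    rw [List.ofFn_succ, List.count_cons, ih (fun t => s t.succ)]
    rw [Finset.card_filter, Finset.card_filter, Fin.sum_univ_succ]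
    simp [beq_iff_eq, add_comm]

lemma goodL_ofFn_iff {m i : ℕ} (s : Fin (m + 2 * i + 1) → ℤ) :
    GoodL m i (List.ofFn s) ↔
      ((∀ t, s t = 1 ∨ s t = -1) ∧
        (Finset.univ.filter fun t => s t = 1).card = i ∧
        ∀ T : ℕ, T ≤ m + 2 * i →
          0 ≤ (m : ℤ) + ∑ t ∈ Finset.univ.filter (fun t : Fin (m + 2 * i + 1) => (t : ℕ) < T), s t) := by
  unfold GoodL
  rw [List.length_ofFn, count_ofFn]
  simp only [List.forall_mem_ofFn_iff, List.sum_take_ofFn, true_and]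

instance tupFinite (m i : ℕ) : Finite {s : Fin (m + 2 * i + 1) → ℤ //
    (∀ t, s t = 1 ∨ s t = -1) ∧
    (Finset.univ.filter fun t => s t = 1).card = i ∧
    ∀ T : ℕ, T ≤ m + 2 * i →
      0 ≤ (m : ℤ) + ∑ t ∈ Finset.univ.filter (fun t : Fin (m + 2 * i + 1) => (t : ℕ) < T), s t} := by
  apply Finite.of_injective (fun s => (fun t => decide (s.1 t = 1) : Fin (m + 2 * i + 1) → Bool))
  intro a b h
  apply Subtype.ext; funext t
  have ht := congrFun h t
  simp only [decide_eq_decide] at ht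
  rcases a.2.1 t with h1 | h1 <;> rcases b.2.1 t with h2 | h2 <;>
    simp [h1, h2] at ht ⊢ <;> omega

noncomputable def listEquiv (m i : ℕ) : {s : Fin (m + 2 * i + 1) → ℤ //
    (∀ t, s t = 1 ∨ s t = -1) ∧
    (Finset.univ.filter fun t => s t = 1).card = i ∧
    ∀ T : ℕ, T ≤ m + 2 * i →
      0 ≤ (m : ℤ) + ∑ t ∈ Finset.univ.filter (fun t : Fin (m + 2 * i + 1) => (t : ℕ) < T), s t}
    ≃ {l : List ℤ // GoodL m i l} where
  toFun s := ⟨List.ofFn s.1, (goodL_ofFn_iff s.1).2 s.2⟩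
  invFun l := ⟨fun t => l.1.get (Fin.cast l.2.1.symm t), by
    have hof : List.ofFn (fun t => l.1.get (Fin.cast l.2.1.symm t)) = l.1 := by
      apply List.ext_get
      · simp [l.2.1]
      · intro n h1 h2
        simp only [List.get_eq_getElem, List.getElem_ofFn, Fin.coe_cast, Fin.cast_mk]
    exact (goodL_ofFn_iff _).1 (by rw [hof]; exact l.2)⟩
  left_inv s := by
    apply Subtype.ext; funext t
    simp only [List.get_eq_getElem, List.getElem_ofFn, Fin.coe_cast, Fin.eta]
  right_inv l := by
    apply Subtype.ext
    apply List.ext_get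
    · simp [l.2.1]
    · intro n h1 h2
      simp only [List.get_eq_getElem, List.getElem_ofFn, Fin.coe_cast, Fin.cast_mk]

instance listFinite (m i : ℕ) : Finite {l : List ℤ // GoodL m i l} :=
  Finite.of_equiv _ (listEquiv m i)

lemma pathCount_eq (i m : ℕ) : pathCount i m = Nat.card {l : List ℤ // GoodL m i l} :=
  Nat.card_congr (listEquiv m i)

lemma goodL_finite (m i : ℕ) : {l : List ℤ | GoodL m i l}.Finite := by
  haveI : Finite ({l : List ℤ | GoodL m i l} : Set (List ℤ)) := listFinite m i
  exact Set.toFinite _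

lemma card_split (P : List ℤ → Prop) (hfin : {l : List ℤ | P l}.Finite)
    (hne : ∀ l, P l → (∃ l', l = 1 :: l') ∨ (∃ l', l = (-1) :: l')) :
    Nat.card {l : List ℤ // P l}
      = Nat.card {l : List ℤ // P (1 :: l)} + Nat.card {l : List ℤ // P ((-1) :: l)} := by
  have hinj1 : Function.Injective (((1 : ℤ)) :: ·) := fun a b h => by injection h
  have hinj2 : Function.Injective (((-1 : ℤ)) :: ·) := fun a b h => by injection h
  have hs1 : (((1 : ℤ)) :: ·) '' {l | P (1 :: l)} ⊆ {l | P l} := by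
    rintro _ ⟨l', h, rfl⟩; exact h
  have hs2 : (((-1 : ℤ)) :: ·) '' {l | P ((-1) :: l)} ⊆ {l | P l} := by
    rintro _ ⟨l', h, rfl⟩; exact h
  have h1 : {l : List ℤ | P l}
      = ((((1 : ℤ)) :: ·) '' {l | P (1 :: l)}) ∪ ((((-1 : ℤ)) :: ·) '' {l | P ((-1) :: l)}) := by
    ext l; constructor
    · intro hl
      rcases hne l hl with ⟨l', rfl⟩ | ⟨l', rfl⟩
      · exact Or.inl ⟨l', hl, rfl⟩
      · exact Or.inr ⟨l', hl, rfl⟩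
    · intro hl
      rcases hl with h | h
      · exact hs1 h
      · exact hs2 h
  have hdisj : Disjoint ((((1 : ℤ)) :: ·) '' {l | P (1 :: l)})
      ((((-1 : ℤ)) :: ·) '' {l | P ((-1) :: l)}) := by
    rw [Set.disjoint_left]
    rintro _ ⟨a, _, rfl⟩ ⟨b, _, hb⟩
    have : (1 : ℤ) = -1 := by injection hb.symm
    norm_num at this
  have c0 : Nat.card {l : List ℤ // P l} = ({l : List ℤ | P l}).ncard :=
    Nat.card_coe_set_eq _
  have c1 : Nat.card {l : List ℤ // P (1 :: l)} = ({l : List ℤ | P (1 :: l)}).ncard :=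
    Nat.card_coe_set_eq _
  have c2 : Nat.card {l : List ℤ // P ((-1) :: l)} = ({l : List ℤ | P ((-1) :: l)}).ncard :=
    Nat.card_coe_set_eq _
  rw [c0, c1, c2, h1,
    Set.ncard_union_eq hdisj (hfin.subset (h1 ▸ hs1)) (hfin.subset (h1 ▸ hs2)),
    Set.ncard_image_of_injective _ hinj1, Set.ncard_image_of_injective _ hinj2]

lemma goodL_cases {m i : ℕ} {l : List ℤ} (h : GoodL m i l) :
    (∃ l', l = 1 :: l') ∨ (∃ l', l = (-1) :: l') := by
  rcases l with _ | ⟨x, l'⟩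
  · simp [GoodL] at h
  · rcases h.2.1 x List.mem_cons_self with hx | hx
    · exact Or.inl ⟨l', by rw [hx]⟩
    · exact Or.inr ⟨l', by rw [hx]⟩

lemma goodL_cons_one (m i : ℕ) (l : List ℤ) : GoodL m (i + 1) (1 :: l) ↔ GoodL (m + 1) i l := by
  unfold GoodL
  rw [List.length_cons, List.forall_mem_cons, List.count_cons]
  constructor
  · rintro ⟨hlen, ⟨-, hsign⟩, hcount, hpre⟩
    refine ⟨by omega, hsign, by simpa using hcount, ?_⟩
    intro T hT
    have := hpre (T + 1) (by omega)
    rw [List.take_succ_cons] at this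
    rw [List.sum_cons] at this
    push_cast at this ⊢
    linarith
  · rintro ⟨hlen, hsign, hcount, hpre⟩
    refine ⟨by omega, ⟨Or.inl rfl, hsign⟩, by simp [hcount], ?_⟩
    intro T hT
    rcases T with _ | T
    · simp
    · have := hpre T (by omega)
      rw [List.take_succ_cons, List.sum_cons]
      push_cast at this ⊢
      linarith

lemma goodL_cons_neg (m i : ℕ) (l : List ℤ) :
    GoodL (m + 1) i ((-1) :: l) ↔ GoodL m i l := by
  unfold GoodL
  rw [List.length_cons, List.forall_mem_cons, List.count_cons]
  constructor
  · rintro ⟨hlen, ⟨-, hsign⟩, hcount, hpre⟩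
    refine ⟨by omega, hsign, by simpa using hcount, ?_⟩
    intro T hT
    have := hpre (T + 1) (by omega)
    rw [List.take_succ_cons, List.sum_cons] at this
    push_cast at this ⊢
    linarith
  · rintro ⟨hlen, hsign, hcount, hpre⟩
    refine ⟨by omega, ⟨Or.inr rfl, hsign⟩, by simpa using hcount, ?_⟩
    intro T hT
    rcases T with _ | T
    · simp only [List.take_zero, List.sum_nil, add_zero]
      positivity
    · have := hpre T (by omega)
      rw [List.take_succ_cons, List.sum_cons]
      push_cast at this ⊢
      linarith

lemma pathCount_zero (m : ℕ) : pathCount 0 m = 1 := by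
  rw [pathCount_eq, Nat.card_eq_one_iff_unique]
  constructor
  · constructor
    rintro ⟨l1, h1⟩ ⟨l2, h2⟩
    have key : ∀ l : List ℤ, GoodL m 0 l → l = List.replicate (m + 1) (-1) := by
      intro l hl
      rw [List.eq_replicate_iff]
      refine ⟨by have := hl.1; omega, ?_⟩
      intro b hb
      rcases hl.2.1 b hb with h | h
      · exfalso
        have := List.count_eq_zero.1 hl.2.2.1
        exact this (h ▸ hb)
      · exact h
    apply Subtype.ext
    show l1 = l2
    rw [key l1 h1, key l2 h2]
  · refine ⟨⟨List.replicate (m + 1) (-1), ?_, ?_, ?_, ?_⟩⟩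
    · simp
    · intro x hx
      have := List.eq_of_mem_replicate hx
      right; exact this
    · exact List.count_eq_zero.2 (by simp)
    · intro T hT
      rw [List.take_replicate, List.sum_replicate]
      have hmin : min T (m + 1) = T := by omega
      rw [hmin]
      simp only [nsmul_eq_mul]
      have : (T : ℤ) ≤ m := by omega
      linarith

lemma goodL_zero_neg_empty (i : ℕ) (l : List ℤ) : ¬ GoodL 0 (i + 1) ((-1) :: l) := by
  intro h
  have := h.2.2.2 1 (by omega)
  rw [List.take_succ_cons, List.take_zero, List.sum_cons, List.sum_nil] at this
  norm_num at this

lemma pathCount_succ_zero (i : ℕ) : pathCount (i + 1) 0 = pathCount i 1 := by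
  rw [pathCount_eq, pathCount_eq,
    card_split (GoodL 0 (i + 1)) (goodL_finite 0 (i+1)) (fun l h => goodL_cases h)]
  have h2 : Nat.card {l : List ℤ // GoodL 0 (i + 1) ((-1) :: l)} = 0 := by
    have : IsEmpty {l : List ℤ // GoodL 0 (i + 1) ((-1) :: l)} :=
      ⟨fun x => goodL_zero_neg_empty i x.1 x.2⟩
    exact Nat.card_of_isEmpty
  rw [h2, Nat.card_congr (Equiv.subtypeEquivRight (fun l => goodL_cons_one 0 i l))]
  rfl

lemma pathCount_succ_succ (i m : ℕ) :
    pathCount (i + 1) (m + 1) = pathCount (i + 1) m + pathCount i (m + 2) := by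
  rw [pathCount_eq, pathCount_eq, pathCount_eq,
    card_split (GoodL (m + 1) (i + 1)) (goodL_finite (m+1) (i+1)) (fun l h => goodL_cases h),
    Nat.card_congr (Equiv.subtypeEquivRight (fun l => goodL_cons_one (m + 1) i l)),
    Nat.card_congr (Equiv.subtypeEquivRight (fun l => goodL_cons_neg m (i + 1) l))]
  exact Nat.add_comm _ _


open Filter Finset

noncomputable def Sf (I : ℝ) (m L : ℕ) : ℝ :=
  ∑ i ∈ Finset.range L, (pathCount i m : ℝ) * (1 - I) ^ i * I ^ (m + 1 + i)

section anal
variable {I : ℝ} (hI0 : 0 ≤ I) (hI1 : I < 1)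

include hI0 hI1 in
lemma Sf_nonneg (m L : ℕ) : 0 ≤ Sf I m L := by
  apply Finset.sum_nonneg
  intro i _
  have h1 : (0:ℝ) ≤ 1 - I := by linarith
  positivity

include hI0 hI1 in
lemma Sf_mono (m : ℕ) : Monotone (Sf I m) := by
  apply monotone_nat_of_le_succ
  intro L
  have h1 : (0:ℝ) ≤ 1 - I := by linarith
  have h2 : (0:ℝ) ≤ (pathCount L m : ℝ) * (1 - I) ^ L * I ^ (m + 1 + L) := by positivity
  have h3 : Sf I m (L + 1) = Sf I m L + (pathCount L m : ℝ) * (1 - I) ^ L * I ^ (m + 1 + L) := by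
    simp only [Sf]; rw [Finset.sum_range_succ]
  linarith

lemma Sf_rec_zero (I : ℝ) (L : ℕ) : Sf I 0 (L + 1) = I + (1 - I) * Sf I 1 L := by
  unfold Sf
  rw [Finset.sum_range_succ' (fun i => (pathCount i 0 : ℝ) * (1 - I) ^ i * I ^ (0 + 1 + i)) L,
    Finset.mul_sum, pathCount_zero]
  have key : ∀ i, (pathCount (i + 1) 0 : ℝ) * (1 - I) ^ (i + 1) * I ^ (0 + 1 + (i + 1))
      = (1 - I) * ((pathCount i 1 : ℝ) * (1 - I) ^ i * I ^ (1 + 1 + i)) := by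
    intro i; rw [pathCount_succ_zero]; ring
  rw [Finset.sum_congr rfl (fun i _ => key i)]
  push_cast
  ring

lemma Sf_rec_succ (I : ℝ) (m L : ℕ) :
    Sf I (m + 1) (L + 1) = I * Sf I m (L + 1) + (1 - I) * Sf I (m + 2) L := by
  unfold Sf
  rw [Finset.sum_range_succ' (fun i => (pathCount i (m + 1) : ℝ) * (1 - I) ^ i * I ^ (m + 1 + 1 + i)) L,
    Finset.sum_range_succ' (fun i => (pathCount i m : ℝ) * (1 - I) ^ i * I ^ (m + 1 + i)) L,
    pathCount_zero, pathCount_zero]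
  have key : ∀ i, (pathCount (i + 1) (m + 1) : ℝ) * (1 - I) ^ (i + 1) * I ^ (m + 1 + 1 + (i + 1))
      = I * ((pathCount (i + 1) m : ℝ) * (1 - I) ^ (i + 1) * I ^ (m + 1 + (i + 1)))
        + (1 - I) * ((pathCount i (m + 2) : ℝ) * (1 - I) ^ i * I ^ (m + 2 + 1 + i)) := by
    intro i; rw [pathCount_succ_succ]; push_cast; ring
  rw [Finset.sum_congr rfl (fun i _ => key i), Finset.sum_add_distrib,
    ← Finset.mul_sum, ← Finset.mul_sum]
  push_cast
  ring

include hI0 hI1 in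
lemma Sf_le_one : ∀ L m, Sf I m L ≤ 1 := by
  intro L
  induction L with
  | zero => intro m; rw [Sf]; simp
  | succ L ih =>
    intro m
    induction m with
    | zero =>
      rw [Sf_rec_zero]
      have h1 := ih 1
      have h2 := Sf_nonneg hI0 hI1 1 L
      nlinarith
    | succ m ihm =>
      rw [Sf_rec_succ]
      have h1 := ih (m + 2)
      have h2 := Sf_nonneg hI0 hI1 (m + 2) L
      nlinarith

include hI0 hI1 in
lemma Sf_le_r : ∀ L m, Sf I m L ≤ (I / (1 - I)) ^ (m + 1) := by
  have h1I : (0:ℝ) < 1 - I := by linarith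
  have hrI : (1 - I) * (I / (1 - I)) = I := by field_simp
  have hr0 : (0:ℝ) ≤ I / (1 - I) := div_nonneg hI0 (le_of_lt h1I)
  intro L
  induction L with
  | zero => intro m; rw [Sf]; simp; positivity
  | succ L ih =>
    intro m
    induction m with
    | zero =>
      rw [Sf_rec_zero]
      have h1 := ih 1
      have key : I + (1 - I) * (I / (1 - I)) ^ (1 + 1) = (I / (1 - I)) ^ (0 + 1) := by
        linear_combination (I / (1 - I) - 1) * hrI
      rw [← key]
      nlinarith
    | succ m ihm =>
      rw [Sf_rec_succ]
      have h1 := ih (m + 2)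
      have key : I * (I / (1 - I)) ^ (m + 1) + (1 - I) * (I / (1 - I)) ^ (m + 2 + 1)
          = (I / (1 - I)) ^ (m + 1 + 1) := by
        linear_combination ((I / (1 - I)) ^ (m + 1) * (I / (1 - I)) - (I / (1 - I)) ^ (m + 1)) * hrI
      rw [← key]
      have hp : (0:ℝ) ≤ (I / (1 - I)) ^ (m + 1) := by positivity
      nlinarith

noncomputable def gl (I : ℝ) (m : ℕ) : ℝ := ⨆ L, Sf I m L

include hI0 hI1 in
lemma gl_bdd (m : ℕ) : BddAbove (Set.range (Sf I m)) :=
  ⟨1, by rintro x ⟨L, rfl⟩; exact Sf_le_one hI0 hI1 L m⟩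

include hI0 hI1 in
lemma tendsto_gl (m : ℕ) : Tendsto (Sf I m) atTop (nhds (gl I m)) :=
  tendsto_atTop_ciSup (Sf_mono hI0 hI1 m) (gl_bdd hI0 hI1 m)

include hI0 hI1 in
lemma gl_nonneg (m : ℕ) : 0 ≤ gl I m := by
  have h := le_ciSup (gl_bdd hI0 hI1 m) 0
  have h0 : Sf I m 0 = 0 := by rw [Sf]; simp
  rw [h0] at h
  exact h

include hI0 hI1 in
lemma gl_le_one (m : ℕ) : gl I m ≤ 1 := ciSup_le (fun L => Sf_le_one hI0 hI1 L m)

include hI0 hI1 in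
lemma gl_le_r (m : ℕ) : gl I m ≤ (I / (1 - I)) ^ (m + 1) :=
  ciSup_le (fun L => Sf_le_r hI0 hI1 L m)

include hI0 hI1 in
lemma gl_rec_zero : gl I 0 = I + (1 - I) * gl I 1 := by
  have t1 : Tendsto (fun L => Sf I 0 (L + 1)) atTop (nhds (gl I 0)) :=
    (tendsto_gl hI0 hI1 0).comp (tendsto_add_atTop_nat 1)
  have t2 : Tendsto (fun L => I + (1 - I) * Sf I 1 L) atTop (nhds (I + (1 - I) * gl I 1)) :=
    tendsto_const_nhds.add ((tendsto_gl hI0 hI1 1).const_mul _)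
  have he : (fun L => Sf I 0 (L + 1)) = fun L => I + (1 - I) * Sf I 1 L :=
    funext (fun L => Sf_rec_zero I L)
  rw [he] at t1
  exact tendsto_nhds_unique t1 t2

include hI0 hI1 in
lemma gl_rec_succ (m : ℕ) : gl I (m + 1) = I * gl I m + (1 - I) * gl I (m + 2) := by
  have t1 : Tendsto (fun L => Sf I (m + 1) (L + 1)) atTop (nhds (gl I (m + 1))) :=
    (tendsto_gl hI0 hI1 (m + 1)).comp (tendsto_add_atTop_nat 1)
  have t2 : Tendsto (fun L => I * Sf I m (L + 1) + (1 - I) * Sf I (m + 2) L) atTop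
      (nhds (I * gl I m + (1 - I) * gl I (m + 2))) := by
    exact (((tendsto_gl hI0 hI1 m).comp (tendsto_add_atTop_nat 1)).const_mul _).add
      ((tendsto_gl hI0 hI1 (m + 2)).const_mul _)
  have he : (fun L => Sf I (m + 1) (L + 1)) = fun L => I * Sf I m (L + 1) + (1 - I) * Sf I (m + 2) L :=
    funext (fun L => Sf_rec_succ I m L)
  rw [he] at t1
  exact tendsto_nhds_unique t1 t2

include hI1 in
lemma delta_eq (X : ℕ → ℝ) (hrec : ∀ m, X (m + 1) = I * X m + (1 - I) * X (m + 2))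
    (hb : X 0 = (1 - I) * X 1) :
    ∀ m, X (m + 1) - X m = (I / (1 - I)) ^ m * (I * X 1) := by
  have h1I : (0:ℝ) < 1 - I := by linarith
  intro m
  induction m with
  | zero => rw [hb]; ring
  | succ m ih =>
    have h2 : (1 - I) * (X (m + 2) - X (m + 1)) = I * (X (m + 1) - X m) := by
      linear_combination (-1 : ℝ) * hrec m
    have h3 : X (m + 2) - X (m + 1) = (I / (1 - I)) * (X (m + 1) - X m) := by
      rw [div_mul_eq_mul_div, eq_div_iff (ne_of_gt h1I)]
      linarith
    calc X (m + 1 + 1) - X (m + 1) = (I / (1 - I)) * (X (m + 1) - X m) := h3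
    _ = (I / (1 - I)) * ((I / (1 - I)) ^ m * (I * X 1)) := by rw [ih]
    _ = (I / (1 - I)) ^ (m + 1) * (I * X 1) := by rw [pow_succ]; ring

include hI0 hI1 in
lemma X_mono (X : ℕ → ℝ) (hrec : ∀ m, X (m + 1) = I * X m + (1 - I) * X (m + 2))
    (hb : X 0 = (1 - I) * X 1) (hX1 : 0 ≤ X 1) :
    ∀ m k, X m ≤ X (m + k) := by
  have h1I : (0:ℝ) < 1 - I := by linarith
  have hr0 : (0:ℝ) ≤ I / (1 - I) := div_nonneg hI0 (le_of_lt h1I)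
  intro m k
  induction k with
  | zero => exact le_refl _
  | succ k ih =>
    have hd := delta_eq hI1 X hrec hb (m + k)
    have : (0:ℝ) ≤ (I / (1 - I)) ^ (m + k) * (I * X 1) := by positivity
    calc X m ≤ X (m + k) := ih
    _ ≤ X (m + k + 1) := by linarith
include hI0 hI1 in
lemma gl_eq_gamblerP (m : ℕ) : gl I m = gamblerP I m := by
  have h1I : (0:ℝ) < 1 - I := by linarith
  have hrI : (1 - I) * (I / (1 - I)) = I := by field_simp
  have hr0 : (0:ℝ) ≤ I / (1 - I) := div_nonneg hI0 (le_of_lt h1I)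
  set r := I / (1 - I) with hr
  by_cases hI2 : I < 1 / 2
  · -- subcritical: gl I m = r ^ (m+1)
    have hrlt : r < 1 := by rw [hr, div_lt_one h1I]; linarith
    set X : ℕ → ℝ := fun m => r ^ (m + 1) - gl I m with hX
    have hrec : ∀ m, X (m + 1) = I * X m + (1 - I) * X (m + 2) := by
      intro m
      have hg := gl_rec_succ hI0 hI1 m
      simp only [hX]
      linear_combination (-1:ℝ) * hg + (r ^ (m + 1) - r ^ (m + 1) * r) * hrI
    have hb : X 0 = (1 - I) * X 1 := by
      have hg := gl_rec_zero hI0 hI1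
      simp only [hX]
      linear_combination (-1:ℝ) * hg + (1 - r) * hrI
    have hX1 : 0 ≤ X 1 := by
      simp only [hX]
      have h9 := gl_le_r hI0 hI1 1
      rw [← hr] at h9
      linarith
    have hmono := X_mono hI0 hI1 X hrec hb hX1
    have hub : ∀ k, X m ≤ r ^ (m + k + 1) := by
      intro k
      calc X m ≤ X (m + k) := hmono m k
      _ ≤ r ^ (m + k + 1) := by
          simp only [hX]
          have h9 := gl_nonneg hI0 hI1 (m + k)
          linarith
    have htend : Tendsto (fun k : ℕ => r ^ (m + k + 1)) atTop (nhds 0) := by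
      have h1 : Tendsto (fun k : ℕ => r ^ k) atTop (nhds 0) :=
        tendsto_pow_atTop_nhds_zero_of_lt_one hr0 hrlt
      have h2 : (fun k : ℕ => r ^ (m + k + 1)) = fun k : ℕ => r ^ (m + 1) * r ^ k := by
        funext k; rw [← pow_add]; ring_nf
      rw [h2]
      simpa using h1.const_mul (r ^ (m + 1))
    have hle0 : X m ≤ 0 := ge_of_tendsto' htend hub
    have hge0 : 0 ≤ X m := by
      simp only [hX]
      have h9 := gl_le_r hI0 hI1 m
      rw [← hr] at h9
      linarith
    have : gl I m = r ^ (m + 1) := by simp only [hX] at hle0 hge0; linarith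
    rw [this, gamblerP, if_pos hI2]
  · -- supercritical: gl I m = 1
    have hI2' : (1:ℝ) / 2 ≤ I := by linarith [not_lt.1 hI2]
    have hIpos : 0 < I := by linarith
    have hr1 : 1 ≤ r := by rw [hr, le_div_iff₀ h1I]; linarith
    set X : ℕ → ℝ := fun m => 1 - gl I m with hX
    have hrec : ∀ m, X (m + 1) = I * X m + (1 - I) * X (m + 2) := by
      intro m
      have hg := gl_rec_succ hI0 hI1 m
      simp only [hX]
      linear_combination (-1:ℝ) * hg
    have hb : X 0 = (1 - I) * X 1 := by
      have hg := gl_rec_zero hI0 hI1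
      simp only [hX]
      linear_combination (-1:ℝ) * hg
    have hX1 : 0 ≤ X 1 := by
      simp only [hX]; have := gl_le_one hI0 hI1 1; linarith
    have hXle : ∀ n, X n ≤ 1 := by
      intro n; simp only [hX]; have := gl_nonneg hI0 hI1 n; linarith
    -- show X 1 = 0
    have hgrow : ∀ k : ℕ, X 1 + k * (I * X 1) ≤ X (1 + k) := by
      intro k
      induction k with
      | zero => simp
      | succ k ih =>
        have hd := delta_eq hI1 X hrec hb (1 + k)
        rw [← hr] at hd
        have hpow : 1 ≤ r ^ (1 + k) := one_le_pow₀ hr1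
        have hnn : 0 ≤ I * X 1 := mul_nonneg (le_of_lt hIpos) hX1
        have h5 : I * X 1 ≤ r ^ (1 + k) * (I * X 1) := le_mul_of_one_le_left hnn hpow
        push_cast
        have : X (1 + k) + I * X 1 ≤ X (1 + k + 1) := by linarith
        push_cast at ih
        calc X 1 + (k + 1 : ℝ) * (I * X 1) = (X 1 + k * (I * X 1)) + I * X 1 := by ring
        _ ≤ X (1 + k) + I * X 1 := by linarith
        _ ≤ X (1 + k + 1) := this
    have hX1le : X 1 ≤ 0 := by
      by_contra hpos
      push_neg at hpos
      have hq : 0 < I * X 1 := mul_pos hIpos hpos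
      obtain ⟨k, hk⟩ := exists_nat_gt ((1 - X 1) / (I * X 1))
      have : (1 - X 1) < k * (I * X 1) := by
        rw [div_lt_iff₀ hq] at hk; linarith
      have h6 := hgrow k
      have h7 := hXle (1 + k)
      linarith
    have hX1eq : X 1 = 0 := le_antisymm hX1le hX1
    have hX0 : X 0 = 0 := by rw [hb, hX1eq, mul_zero]
    have hall : ∀ n, X n = 0 := by
      intro n
      induction n with
      | zero => exact hX0
      | succ n ih =>
        have hd := delta_eq hI1 X hrec hb n
        rw [hX1eq] at hd
        simp at hd
        linarith
    have : gl I m = 1 := by have := hall m; simp only [hX] at this; linarith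
    rw [this, gamblerP, if_neg hI2]

include hI0 hI1 in
lemma tendsto_Sf_gamblerP (m : ℕ) :
    Tendsto (fun L => Sf I m L) atTop (nhds (gamblerP I m)) := by
  have := tendsto_gl hI0 hI1 m
  rwa [gl_eq_gamblerP hI0 hI1 m] at this
end anal
end DS

/-- If `0 ≤ I < 1`, the success probability of a time-restricted double-spending attack
converges to that of a time-unrestricted one as the time restriction `L → ∞`. -/
theorem P_TR_tendsto_P_TU (I : ℝ) (hI0 : 0 ≤ I) (hI1 : I < 1) (Z : ℕ) :
    Filter.Tendsto (fun L : ℕ => P_TR I Z L) Filter.atTop (nhds (P_TU I Z)) := by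
  have hPTR : ∀ L, P_TR I Z L = 1 - ∑ k ∈ Finset.range (Z + 2),
      (Nat.choose (k + Z) k : ℝ) * I ^ k * (1 - I) ^ (Z + 1) *
        (1 - DS.Sf I (Z + 1 - k) L) := by
    intro L
    unfold P_TR DS.Sf
    congr 1
    apply Finset.sum_congr rfl
    intro k hk
    have hk' : k ≤ Z + 1 := by
      have := Finset.mem_range.1 hk; omega
    have h2 : (∑ i ∈ Finset.range L,
          (pathCount i (Z + 1 - k) : ℝ) * (1 - I) ^ i * I ^ (Z + 2 - k + i))
        = ∑ i ∈ Finset.range L,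
          (pathCount i (Z + 1 - k) : ℝ) * (1 - I) ^ i * I ^ (Z + 1 - k + 1 + i) := by
      apply Finset.sum_congr rfl
      intro i _
      rw [show Z + 2 - k = Z + 1 - k + 1 from by omega]
    rw [h2]
  simp only [hPTR]
  unfold P_TU
  apply Filter.Tendsto.const_sub
  apply tendsto_finset_sum
  intro k _
  exact Filter.Tendsto.const_mul _
    (Filter.Tendsto.const_sub _ (DS.tendsto_Sf_gamblerP hI0 hI1 _))
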